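/- A real number x of the form a + bφ with a, b ∈ ℤ has a multiplicative inverse of the same form (i.e., x is a unit of ℤ[φ]) if and only if x = φ^k or x = −φ^k for some integer k. Equivalently, the unit group of the ring ℤ[φ] ⊂ ℝ is exactly {±φ^k : k ∈ ℤ}. -/

import Mathlib

noncomputable def φ : ℝ := (1 + Real.sqrt 5) / 2

/-- The golden integer ring `ℤ[φ]` as a subset of `ℝ`. -/
def Zφ : Set ℝ := {x | ∃ a b : ℤ, x = (a : ℝ) + (b : ℝ) * φ}

/-!
A unit `u` of `ℤ[φ]` has norm `u u' = ±1`, where `u'` is its Galois conjugate (`φ ↦ ψ = 1 - φ`).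
Hence a unit in `[1, φ)` has `|u'| ≤ 1`, and comparing `u - u' = b √5` and `u + u' = 2a + b`
with these bounds leaves only `u = 1`. Every positive unit is moved into `[1, φ)` by a power of `φ`.
-/

local notation "ψ" => Real.goldenConj

theorem phi_eq_goldenRatio : φ = Real.goldenRatio := rfl

theorem phi_sq : φ ^ 2 = φ + 1 := Real.goldenRatio_sq

theorem phi_pos : 0 < φ := Real.goldenRatio_pos

theorem phi_ne_zero : φ ≠ 0 := Real.goldenRatio_ne_zero

theorem one_lt_phi : 1 < φ := Real.one_lt_goldenRatio

theorem phi_lt_two : φ < 2 := Real.goldenRatio_lt_two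

theorem goldenConj_eq_one_sub_phi : ψ = 1 - φ := Real.one_sub_goldenConj.symm

theorem mul_int_add_int_mul_phi (a b c d : ℤ) :
    ((a : ℝ) + b * φ) * (c + d * φ) = ↑(a * c + b * d) + ↑(a * d + b * c + b * d) * φ := by
  push_cast
  linear_combination (b : ℝ) * d * phi_sq

def Zφ.subring : Subring ℝ where
  carrier := Zφ
  mul_mem' := by
    rintro _ _ ⟨a, b, rfl⟩ ⟨c, d, rfl⟩
    exact ⟨_, _, mul_int_add_int_mul_phi a b c d⟩
  one_mem' := ⟨1, 0, by simp⟩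
  add_mem' := by
    rintro _ _ ⟨a, b, rfl⟩ ⟨c, d, rfl⟩
    exact ⟨a + c, b + d, by push_cast; ring⟩
  zero_mem' := ⟨0, 0, by simp⟩
  neg_mem' := by
    rintro _ ⟨a, b, rfl⟩
    exact ⟨-a, -b, by push_cast; ring⟩

theorem Zφ.phi_zpow_mem (k : ℤ) : φ ^ k ∈ Zφ.subring := by
  have hφ : φ ∈ Zφ.subring := ⟨0, 1, by simp⟩
  have hφinv : φ⁻¹ ∈ Zφ.subring := by
    rw [inv_eq_of_mul_eq_one_right (b := φ - 1) (by linear_combination phi_sq)]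
    exact ⟨-1, 1, by push_cast; ring⟩
  induction k using Int.induction_on with
  | zero => simp [Zφ.subring.one_mem]
  | succ n ih => rw [zpow_add_one₀ phi_ne_zero]; exact Zφ.subring.mul_mem ih hφ
  | pred n ih => rw [zpow_sub_one₀ phi_ne_zero]; exact Zφ.subring.mul_mem ih hφinv

theorem int_add_int_mul_phi_eq_zero {p q : ℤ} (h : (p : ℝ) + q * φ = 0) : p = 0 ∧ q = 0 := by
  obtain rfl : q = 0 := by
    by_contra hq
    exact (Real.goldenRatio_irrational.intCast_mul hq).ne_int (-p)
      (by rw [← phi_eq_goldenRatio]; push_cast; linarith)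
  exact ⟨by simpa using h, rfl⟩

theorem conj_mul_conj_eq_one {a b c d : ℤ} (h : ((a : ℝ) + b * φ) * (c + d * φ) = 1) :
    ((a : ℝ) + b * ψ) * (c + d * ψ) = 1 := by
  -- both coefficients of `uv - 1` vanish, and `ψ` satisfies the same relation `X² = X + 1`
  obtain ⟨h₁, h₂⟩ : a * c + b * d - 1 = 0 ∧ a * d + b * c + b * d = 0 := by
    apply int_add_int_mul_phi_eq_zero
    push_cast
    linear_combination h - (b : ℝ) * d * phi_sq
  have h₁' : (a * c + b * d - 1 : ℝ) = 0 := by exact_mod_cast h₁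
  have h₂' : (a * d + b * c + b * d : ℝ) = 0 := by exact_mod_cast h₂
  linear_combination (b : ℝ) * d * Real.goldenConj_sq + h₁' + ψ * h₂'

theorem int_add_int_mul_phi_mul_conj (a b : ℤ) :
    ((a : ℝ) + b * φ) * (a + b * ψ) = ↑(a ^ 2 + a * b - b ^ 2) := by
  rw [goldenConj_eq_one_sub_phi]
  push_cast
  linear_combination (-(b : ℝ) ^ 2) * phi_sq

theorem norm_eq_one_or_neg_one_of_mul_eq_one {a b c d : ℤ}
    (h : ((a : ℝ) + b * φ) * (c + d * φ) = 1) :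
    a ^ 2 + a * b - b ^ 2 = 1 ∨ a ^ 2 + a * b - b ^ 2 = -1 := by
  have hnorm : (a ^ 2 + a * b - b ^ 2) * (c ^ 2 + c * d - d ^ 2) = 1 := by
    have hR : ((a ^ 2 + a * b - b ^ 2 : ℤ) : ℝ) * ↑(c ^ 2 + c * d - d ^ 2) = 1 := by
      rw [← int_add_int_mul_phi_mul_conj, ← int_add_int_mul_phi_mul_conj]
      linear_combination (↑a + ↑b * ψ) * (↑c + ↑d * ψ) * h + conj_mul_conj_eq_one h
    exact_mod_cast hR
  exact Int.eq_one_or_neg_one_of_mul_eq_one hnorm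

theorem eq_one_of_mem_Ico_of_mul_eq_one {u v : ℝ} (hu : u ∈ Zφ) (hv : v ∈ Zφ)
    (huv : u * v = 1) (h : u ∈ Set.Ico 1 φ) : u = 1 := by
  obtain ⟨a, b, rfl⟩ := hu
  obtain ⟨c, d, rfl⟩ := hv
  obtain ⟨h1, h2⟩ := h
  have hconj : -1 ≤ (a : ℝ) + b * ψ ∧ (a : ℝ) + b * ψ ≤ 1 := by
    have hN := int_add_int_mul_phi_mul_conj a b
    rcases norm_eq_one_or_neg_one_of_mul_eq_one huv with hn | hn <;>
      rw [hn] at hN <;> push_cast at hN <;> constructor <;> nlinarith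
  rw [goldenConj_eq_one_sub_phi] at hconj
  have hφ₁ := one_lt_phi
  have hφ₂ := phi_lt_two
  -- `u - u' = b (2φ - 1)` lies in `[0, φ + 1)`
  have hb₀ : 0 ≤ b := by
    by_contra! hb
    have : (b : ℝ) ≤ -1 := by exact_mod_cast Int.le_sub_one_of_lt hb
    nlinarith
  have hb₁ : b ≤ 1 := by
    by_contra! hb
    have : (2 : ℝ) ≤ b := by exact_mod_cast hb
    nlinarith
  interval_cases b
  · obtain rfl : a = 1 := by
      have : (1 : ℝ) ≤ a ∧ (a : ℝ) < 2 := by push_cast at h1 h2; constructor <;> linarith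
      have : 1 ≤ a ∧ a < 2 := by exact_mod_cast this
      omega
    simp
  · have : (a : ℝ) < 0 ∧ -1 < (a : ℝ) := by push_cast at h1 h2; constructor <;> linarith
    have : a < 0 ∧ -1 < a := by exact_mod_cast this
    omega

theorem exists_eq_phi_zpow_of_mul_eq_one {x y : ℝ} (hx : x ∈ Zφ) (hy : y ∈ Zφ)
    (hxy : x * y = 1) (hpos : 0 < x) : ∃ k : ℤ, x = φ ^ k := by
  obtain ⟨k, hk₁, hk₂⟩ := exists_mem_Ico_zpow hpos one_lt_phi
  have hk : 0 < φ ^ k := zpow_pos phi_pos k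
  refine ⟨k, ?_⟩
  have hu : x / φ ^ k = 1 := by
    apply eq_one_of_mem_Ico_of_mul_eq_one (v := y * φ ^ k)
    · rw [div_eq_mul_inv, ← zpow_neg]
      exact Zφ.subring.mul_mem hx (Zφ.phi_zpow_mem (-k))
    · exact Zφ.subring.mul_mem hy (Zφ.phi_zpow_mem k)
    · rw [div_mul_eq_mul_div, ← mul_assoc, hxy, one_mul, div_self hk.ne']
    · rw [Set.mem_Ico, le_div_iff₀ hk, div_lt_iff₀ hk, one_mul, ← zpow_one_add₀ phi_ne_zero,
        add_comm]
      exact ⟨hk₁, hk₂⟩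
  rwa [div_eq_one_iff_eq hk.ne'] at hu

/-- `x ∈ ℤ[φ]` is a unit of `ℤ[φ]` iff `x = ±φ^k` for some integer `k`. -/
theorem golden_units (x : ℝ) (hx : x ∈ Zφ) :
    (∃ y ∈ Zφ, x * y = 1) ↔ ∃ k : ℤ, x = φ ^ k ∨ x = -φ ^ k := by
  have hinv (k : ℤ) : φ ^ k * φ ^ (-k) = 1 := by
    rw [← zpow_add₀ phi_ne_zero, add_neg_cancel, zpow_zero]
  constructor
  · rintro ⟨y, hy, hxy⟩
    rcases (left_ne_zero_of_mul_eq_one hxy).lt_or_gt with hneg | hpos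
    · obtain ⟨k, hk⟩ := exists_eq_phi_zpow_of_mul_eq_one (Zφ.subring.neg_mem hx)
        (Zφ.subring.neg_mem hy) (by rwa [neg_mul_neg]) (neg_pos.2 hneg)
      exact ⟨k, .inr (by rw [← hk, neg_neg])⟩
    · obtain ⟨k, hk⟩ := exists_eq_phi_zpow_of_mul_eq_one hx hy hxy hpos
      exact ⟨k, .inl hk⟩
  · rintro ⟨k, rfl | rfl⟩
    · exact ⟨φ ^ (-k), Zφ.phi_zpow_mem (-k), hinv k⟩
    · exact ⟨-φ ^ (-k), Zφ.subring.neg_mem (Zφ.phi_zpow_mem (-k)), by rw [neg_mul_neg, hinv]⟩
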